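/- Let n ≥ 1, A = ℤ[x]/(x^{n+1}), and let t : A × A → A be the ℤ-bilinear map determined on the basis by t(x^i, x^j) = x^{i+j−(n+1)} if i + j ≥ n+1 and t(x^i, x^j) = 0 if i + j ≤ n. Then t is not a Hochschild 2-coboundary: there is no ℤ-linear map g : A → A such that t(a,b) = a·g(b) − g(ab) + g(a)·b for all a, b ∈ A. In particular, no ℤ-linear g : A → A satisfies 2·x^n·g(x^n) = x^{n−1}. -/

import Mathlib

/-!
Evaluating the coboundary identity at `a = b = xⁿ`, where `xⁿ · xⁿ = 0` and `t(xⁿ, xⁿ) = xⁿ⁻¹`,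
gives `xⁿ⁻¹ = 2 xⁿ g(xⁿ)`. Multiplying by `x` kills the right-hand side, forcing `xⁿ = 0`.
-/

open Polynomial

noncomputable section

/-- `A = ℤ[x]/(x^{n+1})`, the truncated polynomial ring. -/
abbrev A (n : ℕ) : Type := AdjoinRoot ((X : ℤ[X]) ^ (n + 1))

/-- The class of `X` in `A`, i.e. the element `x`. -/
abbrev xA (n : ℕ) : A n := AdjoinRoot.root _

theorem pow_succ_mul_ne_pow {M : Type*} [MonoidWithZero M] {x : M} {m : ℕ}
    (hx : x ^ (m + 2) = 0) (hx' : x ^ (m + 1) ≠ 0) (y : M) : x ^ (m + 1) * y ≠ x ^ m := by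
  intro h
  apply hx'
  calc x ^ (m + 1) = x * x ^ m := pow_succ' x m
    _ = x ^ (m + 2) * y := by rw [← h, ← mul_assoc, ← pow_succ']
    _ = 0 := by rw [hx, zero_mul]

theorem xA_pow_succ (n : ℕ) : xA n ^ (n + 1) = 0 := by
  rw [xA, ← AdjoinRoot.mk_X, ← map_pow, AdjoinRoot.mk_self]

theorem xA_pow_ne_zero {n k : ℕ} (hk : k ≤ n) : xA n ^ k ≠ 0 := by
  rw [xA, ← AdjoinRoot.mk_X, ← map_pow, Ne, AdjoinRoot.mk_eq_zero]
  intro hdvd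
  have := natDegree_le_of_dvd hdvd (pow_ne_zero _ X_ne_zero)
  simp only [natDegree_X_pow] at this
  omega

/-- the `ℤ`-bilinear map `t : A × A → A` determined on the basis by
`t(xⁱ, xʲ) = x^{i+j−(n+1)}` if `i + j ≥ n+1` and `t(xⁱ, xʲ) = 0` if `i + j ≤ n` is not a
Hochschild 2-coboundary: there is no `ℤ`-linear `g : A → A` with
`t(a,b) = a·g(b) − g(ab) + g(a)·b` for all `a, b`. In particular no `ℤ`-linear
`g : A → A` satisfies `2·xⁿ·g(xⁿ) = x^{n−1}`. -/
theorem stmt15 (n : ℕ) (hn : 1 ≤ n)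
    (t : A n →ₗ[ℤ] A n →ₗ[ℤ] A n)
    (ht : ∀ i j : ℕ, i ≤ n → j ≤ n →
      t ((xA n) ^ i) ((xA n) ^ j) =
        if n + 1 ≤ i + j then (xA n) ^ (i + j - (n + 1)) else 0) :
    (¬ ∃ g : A n →ₗ[ℤ] A n,
        ∀ a b : A n, t a b = a * g b - g (a * b) + g a * b) ∧
    ∀ g : A n →ₗ[ℤ] A n, 2 * (xA n) ^ n * g ((xA n) ^ n) ≠ (xA n) ^ (n - 1) := by
  obtain ⟨m, rfl⟩ : ∃ m, n = m + 1 := ⟨n - 1, by omega⟩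
  set x := xA (m + 1)
  have no_solution (g : A (m + 1) →ₗ[ℤ] A (m + 1)) :
      2 * x ^ (m + 1) * g (x ^ (m + 1)) ≠ x ^ (m + 1 - 1) := by
    rw [Nat.add_sub_cancel, mul_comm 2, mul_assoc]
    exact pow_succ_mul_ne_pow (xA_pow_succ _) (xA_pow_ne_zero le_rfl) _
  refine ⟨fun ⟨g, hg⟩ => no_solution g ?_, no_solution⟩
  have hsq : x ^ (m + 1) * x ^ (m + 1) = 0 := by
    rw [← pow_add]
    exact pow_eq_zero_of_le (by omega) (xA_pow_succ _)
  have hcob := hg (x ^ (m + 1)) (x ^ (m + 1))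
  rw [ht _ _ le_rfl le_rfl, if_pos (by omega), hsq, map_zero] at hcob
  rw [show m + 1 + (m + 1) - (m + 1 + 1) = m + 1 - 1 by omega] at hcob
  rw [hcob]
  ring

end
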